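/- arXiv:2603.28465 — 4 statements merged into one kernel-verified Lean document; each statement's English description precedes it below -/
import Mathlib

section
/- Let A = !![a, b; c, d] be a 2×2 real matrix with trace zero (a + d = 0) and strictly negative determinant, and let B be a 2×2 real matrix with strictly positive determinant. Then the image of the special geodesic S_A under the Möbius transformation of B equals the special geodesic S_{B A B⁻¹}; that is, {w ∈ ℍ : ∃ z ∈ S_A, w = (B₀₀·z + B₀₁)/(B₁₀·z + B₁₁)} = S_{B A B⁻¹}. -/
open Matrix Complex ComplexConjugate

/-!
The Möbius action of real matrices is multiplicative, commutes with complex conjugation (the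
entries are real), and scales `Im z` by `det M / |M₁₀ z + M₁₁|²`. So if `mobius A z = conj z`,
then `w = mobius B z` satisfies
`mobius (B A B⁻¹) w = mobius B (mobius A z) = mobius B (conj z) = conj w`, and conversely a point
`w` of `S_{B A B⁻¹}` is the image of `mobius B⁻¹ w ∈ S_A`. All denominators are nonzero because
the matrices involved are invertible and the points are off the real line.
-/

noncomputable def mobius (M : Matrix (Fin 2) (Fin 2) ℝ) (z : ℂ) : ℂ :=
  ((M 0 0 : ℂ) * z + M 0 1) / ((M 1 0 : ℂ) * z + M 1 1)

def specialGeodesic (A : Matrix (Fin 2) (Fin 2) ℝ) : Set ℂ :=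
  {z | 0 < z.im ∧ mobius A z = conj z}

section Mobius

variable {M N : Matrix (Fin 2) (Fin 2) ℝ} {z : ℂ}

theorem mobius_denom_ne_zero (hM : M.det ≠ 0) (hz : z.im ≠ 0) :
    (M 1 0 : ℂ) * z + M 1 1 ≠ 0 := by
  intro h
  have h10 : M 1 0 = 0 := by
    simpa [hz] using congrArg Complex.im h
  have h11 : M 1 1 = 0 := by
    simpa [h10] using congrArg Complex.re h
  exact hM (by simp [det_fin_two, h10, h11])

theorem mobius_mul (M : Matrix (Fin 2) (Fin 2) ℝ) (hN : (N 1 0 : ℂ) * z + N 1 1 ≠ 0) :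
    mobius (M * N) z = mobius M (mobius N z) := by
  simp only [mobius, mul_apply, Fin.sum_univ_two]
  push_cast
  field_simp
  ring

theorem mobius_one (z : ℂ) : mobius 1 z = z := by
  simp [mobius]

theorem conj_mobius (M : Matrix (Fin 2) (Fin 2) ℝ) (z : ℂ) :
    conj (mobius M z) = mobius M (conj z) := by
  simp [mobius, map_div₀]

theorem im_mobius (M : Matrix (Fin 2) (Fin 2) ℝ) (z : ℂ) :
    (mobius M z).im = M.det * z.im / normSq ((M 1 0 : ℂ) * z + M 1 1) := by
  rw [mobius, div_im, det_fin_two]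
  simp only [normSq_apply, add_re, add_im, mul_re, mul_im, ofReal_re, ofReal_im]
  ring

theorem im_mobius_pos (hM : 0 < M.det) (hz : 0 < z.im) : 0 < (mobius M z).im := by
  rw [im_mobius]
  exact div_pos (mul_pos hM hz) (normSq_pos.2 (mobius_denom_ne_zero hM.ne' hz.ne'))

end Mobius

theorem mobius_image_specialGeodesic {A B : Matrix (Fin 2) (Fin 2) ℝ} (hA : A.det ≠ 0)
    (hB : 0 < B.det) :
    mobius B '' specialGeodesic A = specialGeodesic (B * A * B⁻¹) := by
  have hBu : IsUnit B.det := hB.ne'.isUnit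
  have hBinv : 0 < B⁻¹.det := by
    rw [det_nonsing_inv, Ring.inverse_eq_inv']
    exact inv_pos.2 hB
  have hBAB : (B * A * B⁻¹).det ≠ 0 := by
    rwa [det_conj ((isUnit_iff_isUnit_det B).2 hBu)]
  ext w
  constructor
  · rintro ⟨z, ⟨hz, hAz⟩, rfl⟩
    refine ⟨im_mobius_pos hB hz, ?_⟩
    calc mobius (B * A * B⁻¹) (mobius B z)
        = mobius (B * A * B⁻¹ * B) z := (mobius_mul _ (mobius_denom_ne_zero hB.ne' hz.ne')).symm
      _ = mobius (B * A) z := by rw [nonsing_inv_mul_cancel_right _ _ hBu]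
      _ = mobius B (mobius A z) := mobius_mul _ (mobius_denom_ne_zero hA hz.ne')
      _ = conj (mobius B z) := by rw [hAz, conj_mobius]
  · rintro ⟨hw, hBABw⟩
    refine ⟨mobius B⁻¹ w, ⟨im_mobius_pos hBinv hw, ?_⟩, ?_⟩
    · calc mobius A (mobius B⁻¹ w)
          = mobius (A * B⁻¹) w := (mobius_mul _ (mobius_denom_ne_zero hBinv.ne' hw.ne')).symm
        _ = mobius (B⁻¹ * (B * A * B⁻¹)) w := by
          rw [Matrix.mul_assoc B, nonsing_inv_mul_cancel_left _ _ hBu]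
        _ = mobius B⁻¹ (mobius (B * A * B⁻¹) w) := mobius_mul _ (mobius_denom_ne_zero hBAB hw.ne')
        _ = conj (mobius B⁻¹ w) := by rw [hBABw, conj_mobius]
    · rw [← mobius_mul _ (mobius_denom_ne_zero hBinv.ne' hw.ne'), mul_nonsing_inv _ hBu,
        mobius_one]

theorem mobius_image_special_geodesic_general
    (a b c d : ℝ) (A B : Matrix (Fin 2) (Fin 2) ℝ)
    (hA : A = !![a, b; c, d]) (hdet : A.det < 0)
    (hB : 0 < B.det) :
    {w : ℂ | 0 < w.im ∧ ∃ z : ℂ,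
        (0 < z.im ∧ ((a : ℂ) * z + (b : ℂ)) / ((c : ℂ) * z + (d : ℂ)) = conj z) ∧
        w = ((B 0 0 : ℂ) * z + (B 0 1 : ℂ)) / ((B 1 0 : ℂ) * z + (B 1 1 : ℂ))} =
    {w : ℂ | 0 < w.im ∧
        (((B * A * B⁻¹) 0 0 : ℂ) * w + ((B * A * B⁻¹) 0 1 : ℂ)) /
          (((B * A * B⁻¹) 1 0 : ℂ) * w + ((B * A * B⁻¹) 1 1 : ℂ)) = conj w} := by
  have h := mobius_image_specialGeodesic hdet.ne hB
  subst hA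
  ext w
  constructor
  · rintro ⟨-, z, hz, rfl⟩
    exact h.subset ⟨z, hz, rfl⟩
  · intro hw
    obtain ⟨z, hz, rfl⟩ := h.superset hw
    exact ⟨hw.1, z, hz, rfl⟩

/-- For `A = !![a, b; c, d]` real with trace zero and negative determinant,
and `B` real with positive determinant, the image of the special geodesic `S_A` under the
Möbius transformation of `B` is the special geodesic `S_{B A B⁻¹}`. -/
theorem mobius_image_special_geodesic
    (a b c d : ℝ) (A B : Matrix (Fin 2) (Fin 2) ℝ)
    (hA : A = !![a, b; c, d]) (htrace : a + d = 0) (hdet : A.det < 0)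
    (hB : 0 < B.det) :
    {w : ℂ | 0 < w.im ∧ ∃ z : ℂ,
        (0 < z.im ∧ ((a : ℂ) * z + (b : ℂ)) / ((c : ℂ) * z + (d : ℂ)) = conj z) ∧
        w = ((B 0 0 : ℂ) * z + (B 0 1 : ℂ)) / ((B 1 0 : ℂ) * z + (B 1 1 : ℂ))} =
    {w : ℂ | 0 < w.im ∧
        (((B * A * B⁻¹) 0 0 : ℂ) * w + ((B * A * B⁻¹) 0 1 : ℂ)) /
          (((B * A * B⁻¹) 1 0 : ℂ) * w + ((B * A * B⁻¹) 1 1 : ℂ)) = conj w} :=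
  mobius_image_special_geodesic_general a b c d A B hA hdet hB
end

section
/- Let A = !![a, b; c, d] be a 2×2 real matrix with trace zero and strictly negative determinant, let B = !![p, q; r, s] be a 2×2 real matrix with strictly positive determinant, and let z ∈ ℍ. Set w = (p·z + q)/(r·z + s) ∈ ℍ, and write B A B⁻¹ = !![a', b'; c', d']. Then (a·z + b)/(c·z + d) = conj z if and only if (a'·w + b')/(c'·w + d') = conj w. -/
/-!
In the action of `GL(2, ℝ)` on `ℍ`, a matrix with negative determinant acts by
`z ↦ conj ((a z + b)/(c z + d))`, so `(a z + b)/(c z + d) = conj z` says exactly that `z` is a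
fixed point of `A` acting on `ℍ`.
Since `B` has positive determinant it acts by the plain Möbius map, `w = B • z`, and fixed points
of a group action are carried by `B` to fixed points of the conjugate `B A B⁻¹`.
-/

open Matrix Complex ComplexConjugate

namespace UpperHalfPlane

lemma coe_smul_of_det_neg {g : GL (Fin 2) ℝ} (hg : (g : Matrix (Fin 2) (Fin 2) ℝ).det < 0)
    (z : ℍ) : ↑(g • z) = conj (num g z / denom g z) := by
  rw [coe_smul, σ, GeneralLinearGroup.val_det_apply, if_neg hg.not_gt]
  rfl

lemma smul_eq_self_iff_of_det_neg {g : GL (Fin 2) ℝ}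
    (hg : (g : Matrix (Fin 2) (Fin 2) ℝ).det < 0) (z : ℍ) :
    g • z = z ↔ num g z / denom g z = conj (z : ℂ) := by
  rw [UpperHalfPlane.ext_iff, coe_smul_of_det_neg hg, ← (starRingEnd ℂ).injective.eq_iff,
    conj_conj]

lemma num_div_denom_of_coe_eq {g : GL (Fin 2) ℝ} {a b c d : ℝ}
    (hg : (g : Matrix (Fin 2) (Fin 2) ℝ) = !![a, b; c, d]) (z : ℂ) :
    num g z / denom g z = (a * z + b) / (c * z + d) := by
  simp [num, denom, hg]

end UpperHalfPlane

theorem MulAction.conj_smul_smul_eq_smul_iff {G α : Type*} [Group G] [MulAction G α]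
    (g h : G) (x : α) : (h * g * h⁻¹) • h • x = h • x ↔ g • x = x := by
  simp [mul_smul]

open UpperHalfPlane

theorem mobius_conjugation_equivariance_general
    (a b c d p q r s a' b' c' d' : ℝ) (A B : Matrix (Fin 2) (Fin 2) ℝ)
    (hA : A = !![a, b; c, d]) (hB : B = !![p, q; r, s])
    (hdetA : A.det < 0) (hdetB : 0 < B.det)
    (hconj : B * A * B⁻¹ = !![a', b'; c', d'])
    (z : ℂ) (hz : 0 < z.im)
    (w : ℂ) (hw : w = ((p : ℂ) * z + (q : ℂ)) / ((r : ℂ) * z + (s : ℂ))) :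
    ((a : ℂ) * z + (b : ℂ)) / ((c : ℂ) * z + (d : ℂ)) = conj z ↔
    ((a' : ℂ) * w + (b' : ℂ)) / ((c' : ℂ) * w + (d' : ℂ)) = conj w := by
  obtain ⟨gA, rfl⟩ : ∃ g : GL (Fin 2) ℝ, ↑g = A := ⟨.mkOfDetNeZero A hdetA.ne, rfl⟩
  obtain ⟨gB, rfl⟩ : ∃ g : GL (Fin 2) ℝ, ↑g = B := ⟨.mkOfDetNeZero B hdetB.ne', rfl⟩
  obtain ⟨τ, rfl⟩ : ∃ τ : ℍ, ↑τ = z := ⟨⟨z, hz⟩, rfl⟩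
  have hcoeC : ((gB * gA * gB⁻¹ : GL (Fin 2) ℝ) : Matrix (Fin 2) (Fin 2) ℝ) =
      (gB : Matrix (Fin 2) (Fin 2) ℝ) * gA * (gB : Matrix (Fin 2) (Fin 2) ℝ)⁻¹ := by
    rw [GeneralLinearGroup.coe_mul, GeneralLinearGroup.coe_mul, GeneralLinearGroup.coe_inv]
  have hgC := hcoeC.trans hconj
  have hdetC : ((gB * gA * gB⁻¹ : GL (Fin 2) ℝ) : Matrix (Fin 2) (Fin 2) ℝ).det < 0 := by
    rwa [hcoeC, det_conj gB.isUnit]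
  have hwτ : w = ↑(gB • τ) := by
    rw [coe_smul_of_det_pos (by simpa using hdetB), num_div_denom_of_coe_eq hB, hw]
  subst hwτ
  rw [← num_div_denom_of_coe_eq hA, ← num_div_denom_of_coe_eq hgC,
    ← smul_eq_self_iff_of_det_neg hdetA, ← smul_eq_self_iff_of_det_neg hdetC]
  exact (MulAction.conj_smul_smul_eq_smul_iff gA gB τ).symm

/-- For `A = !![a, b; c, d]` with trace zero and negative determinant,
`B = !![p, q; r, s]` with positive determinant, `z ∈ ℍ` and `w = (p z + q)/(r z + s)`,
writing `B A B⁻¹ = !![a', b'; c', d']`, one has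
`(a z + b)/(c z + d) = conj z ↔ (a' w + b')/(c' w + d') = conj w`. -/
theorem mobius_conjugation_equivariance
    (a b c d p q r s a' b' c' d' : ℝ) (A B : Matrix (Fin 2) (Fin 2) ℝ)
    (hA : A = !![a, b; c, d]) (hB : B = !![p, q; r, s])
    (htrace : a + d = 0) (hdetA : A.det < 0) (hdetB : 0 < B.det)
    (hconj : B * A * B⁻¹ = !![a', b'; c', d'])
    (z : ℂ) (hz : 0 < z.im)
    (w : ℂ) (hw : w = ((p : ℂ) * z + (q : ℂ)) / ((r : ℂ) * z + (s : ℂ))) :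
    ((a : ℂ) * z + (b : ℂ)) / ((c : ℂ) * z + (d : ℂ)) = conj z ↔
    ((a' : ℂ) * w + (b' : ℂ)) / ((c' : ℂ) * w + (d' : ℂ)) = conj w :=
  mobius_conjugation_equivariance_general a b c d p q r s a' b' c' d' A B hA hB hdetA hdetB hconj z
    hz w hw
end

section
/- Let A = !![a, b; c, d] be a 2×2 real matrix with trace zero and strictly negative determinant, and assume c ≠ 0. Then the special geodesic S_A = {z ∈ ℍ : (a·z + b)/(c·z + d) = conj z} equals the intersection of ℍ with the circle centered at the real point a/c of radius √(−det A)/|c|; that is, S_A = {z ∈ ℍ : |z − a/c| = √(−det A)/|c|}. -/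
open Matrix Complex ComplexConjugate

/-! For `d = -a`, the expression `conj z * (c z + d) - (a z + b) = c |z|² - 2a Re z - b` is real, so
the fixed-point equation `(a z + b)/(c z + d) = conj z` reduces to the single real equation
`c |z|² = 2a Re z + b`. Dividing by `c` and completing the square turns it into
`|z - a/c|² = (a² + bc)/c²`, and `a² + bc = -det A`. -/

namespace Complex

theorem ofReal_mul_add_ne_zero {c : ℝ} (d : ℝ) {z : ℂ} (hc : c ≠ 0) (hz : z.im ≠ 0) :
    (c : ℂ) * z + d ≠ 0 := fun h => by
  simpa [hc, hz] using congrArg Complex.im h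

theorem mul_add_eq_conj_mul_iff (a b c : ℝ) (z : ℂ) :
    (a : ℂ) * z + b = conj z * (c * z + (-a : ℝ)) ↔ c * normSq z = 2 * a * z.re + b := by
  rw [Complex.ext_iff]
  simp only [add_re, add_im, mul_re, mul_im, conj_re, conj_im, ofReal_re, ofReal_im, normSq_apply]
  constructor
  · rintro ⟨hre, -⟩
    linarith
  · intro h
    constructor <;> linarith

theorem mul_normSq_eq_iff_normSq_sub {a b c : ℝ} (hc : c ≠ 0) (z : ℂ) :
    c * normSq z = 2 * a * z.re + b ↔ normSq (z - (a / c : ℝ)) = (a ^ 2 + b * c) / c ^ 2 := by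
  have hsq : normSq (z - (a / c : ℝ)) = normSq z - 2 * (a / c) * z.re + (a / c) ^ 2 := by
    simp only [normSq_apply, sub_re, sub_im, ofReal_re, ofReal_im, sub_zero]
    ring
  have hfactor : normSq z - 2 * (a / c) * z.re + (a / c) ^ 2 - (a ^ 2 + b * c) / c ^ 2 =
      (c * normSq z - (2 * a * z.re + b)) / c := by
    field_simp
    ring
  rw [hsq, ← sub_eq_zero (a := normSq z - _ + _), hfactor, div_eq_zero_iff, or_iff_left hc,
    sub_eq_zero]

theorem norm_eq_sqrt_div_abs_iff {D : ℝ} (hD : 0 ≤ D) (c : ℝ) (w : ℂ) :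
    ‖w‖ = √D / |c| ↔ normSq w = D / c ^ 2 := by
  rw [← Real.sqrt_sq_eq_abs, ← Real.sqrt_div' _ (sq_nonneg c), norm_def,
    Real.sqrt_inj (normSq_nonneg w) (by positivity)]

end Complex

/-- For `A = !![a, b; c, d]` real with trace zero, strictly negative
determinant, and `c ≠ 0`, the special geodesic `S_A` is the intersection of the upper
half-plane with the circle of center `a/c ∈ ℝ` and radius `√(−det A)/|c|`. -/
theorem special_geodesic_is_semicircle
    (a b c d : ℝ) (A : Matrix (Fin 2) (Fin 2) ℝ)
    (hA : A = !![a, b; c, d]) (htrace : a + d = 0) (hdet : A.det < 0) (hc : c ≠ 0) :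
    {z : ℂ | 0 < z.im ∧ ((a : ℂ) * z + (b : ℂ)) / ((c : ℂ) * z + (d : ℂ)) = conj z} =
    {z : ℂ | 0 < z.im ∧ ‖z - ((a / c : ℝ) : ℂ)‖ = Real.sqrt (-A.det) / |c|} := by
  obtain rfl : d = -a := by linarith
  have hneg_det : -A.det = a ^ 2 + b * c := by
    rw [hA, det_fin_two_of]
    ring
  ext z
  refine and_congr_right fun hz => ?_
  rw [div_eq_iff (ofReal_mul_add_ne_zero _ hc hz.ne'), mul_add_eq_conj_mul_iff,
    mul_normSq_eq_iff_normSq_sub hc, hneg_det, norm_eq_sqrt_div_abs_iff (hneg_det ▸ by linarith)]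
end

section
/- Let f and g be nonzero polynomials in two variables over ℂ (elements of MvPolynomial (Fin 2) ℂ) that have no common nonconstant factor (i.e., every common divisor of f and g is a unit). Then the set of common zeros {p ∈ ℂ × ℂ : f(p) = 0 and g(p) = 0} is finite. -/
/-!
Write `f, g` as polynomials in `Y` over the GCD domain `ℂ[X]`. By Gauss's lemma they stay
relatively prime, hence coprime, over the PID `ℂ(X)[Y]`; clearing denominators in a Bézout
identity gives `a f + b g = d(X)` with `0 ≠ d ∈ ℂ[X]`. So the `X`-coordinates of common zeros are
roots of `d`, and by symmetry the same holds for the `Y`-coordinates.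
-/

open Polynomial Polynomial.Bivariate

namespace Polynomial

section FractionMap

variable {R K : Type*} [CommRing R] [Field K] [Algebra R K] [IsFractionRing R K]

theorem exists_map_eq_C_mul [Nontrivial R] (p : K[X]) :
    ∃ (q : R[X]) (d : R), d ≠ 0 ∧ q.map (algebraMap R K) = C (algebraMap R K d) * p := by
  obtain ⟨d, hd, hq⟩ := IsLocalization.integerNormalization_spec (nonZeroDivisors R) p
  exact ⟨_, d, nonZeroDivisors.ne_zero hd, by rw [hq, Algebra.smul_def, algebraMap_apply]⟩

variable [IsDomain R] [NormalizedGCDMonoid R]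

theorem exists_isPrimitive_associated_map {p : K[X]} (hp : p ≠ 0) :
    ∃ q : R[X], q.IsPrimitive ∧ Associated (q.map (algebraMap R K)) p := by
  obtain ⟨q, d, hd, hq⟩ := exists_map_eq_C_mul (R := R) p
  have hq0 : q ≠ 0 := by
    rintro rfl
    simp_all
  have hc : algebraMap R K q.content ≠ 0 := by
    simpa [IsFractionRing.to_map_eq_zero_iff, content_eq_zero_iff] using hq0
  have hd' : algebraMap R K d ≠ 0 := by simpa [IsFractionRing.to_map_eq_zero_iff] using hd
  refine ⟨q.primPart, q.isPrimitive_primPart, ?_⟩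
  rw [q.eq_C_content_mul_primPart, Polynomial.map_mul, map_C] at hq
  exact (associated_unit_mul_left _ _ (isUnit_C.mpr hc.isUnit)).symm.trans
    (hq ▸ associated_unit_mul_left _ _ (isUnit_C.mpr hd'.isUnit))

theorem isCoprime_map_of_isRelPrime {f g : R[X]} (h : IsRelPrime f g) :
    IsCoprime (f.map (algebraMap R K)) (g.map (algebraMap R K)) := by
  refine IsRelPrime.isCoprime fun p hpf hpg => ?_
  have hp : p ≠ 0 := by
    rintro rfl
    rw [zero_dvd_iff, Polynomial.map_eq_zero_iff (IsFractionRing.injective R K)] at hpf hpg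
    exact not_isRelPrime_zero_zero (hpf ▸ hpg ▸ h)
  obtain ⟨q, hq, hqp⟩ := exists_isPrimitive_associated_map (R := R) hp
  have hqf : q ∣ f := hq.dvd_of_fraction_map_dvd_fraction_map (hqp.dvd_iff_dvd_left.mpr hpf)
  have hqg : q ∣ g := hq.dvd_of_fraction_map_dvd_fraction_map (hqp.dvd_iff_dvd_left.mpr hpg)
  exact hqp.isUnit ((h hqf hqg).map (mapRingHom (algebraMap R K)))

end FractionMap

theorem exists_mul_add_mul_eq_C_of_isRelPrime {R : Type*} [CommRing R] [IsDomain R]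
    [NormalizedGCDMonoid R] {f g : R[X]} (h : IsRelPrime f g) :
    ∃ d : R, d ≠ 0 ∧ ∃ a b : R[X], a * f + b * g = C d := by
  let K := FractionRing R
  obtain ⟨a, b, hab⟩ := isCoprime_map_of_isRelPrime (K := K) h
  obtain ⟨a', da, hda, ha⟩ := exists_map_eq_C_mul (R := R) a
  obtain ⟨b', db, hdb, hb⟩ := exists_map_eq_C_mul (R := R) b
  refine ⟨da * db, mul_ne_zero hda hdb, C db * a', C da * b', ?_⟩
  apply map_injective _ (IsFractionRing.injective R K)
  calc _ = C (algebraMap R K (da * db)) *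
        (a * f.map (algebraMap R K) + b * g.map (algebraMap R K)) := by
        simp only [Polynomial.map_add, Polynomial.map_mul, map_C, ha, hb, map_mul]; ring
    _ = (C (da * db)).map (algebraMap R K) := by rw [hab, mul_one, map_C]

namespace Bivariate

theorem evalEval_swap {R : Type*} [CommRing R] (x y : R) (p : R[X][Y]) :
    (swap p).evalEval x y = p.evalEval y x := by
  simpa only [coe_aevalAeval_eq_evalEval] using aevalAeval_swap x y p

theorem eval_equivMvPolynomial {R : Type*} [CommRing R] (x y : R) (p : R[X][Y]) :
    MvPolynomial.eval ![x, y] (equivMvPolynomial R p) = p.evalEval x y := by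
  have h : (MvPolynomial.aeval ![x, y]).comp (equivMvPolynomial R).toAlgHom = aevalAeval x y :=
    algHom_ext' (by ext; simp) (by simp)
  rw [← coe_aevalAeval_eq_evalEval, ← h]
  rfl

variable {k : Type*} [Field k] {F G : k[X][Y]}

theorem finite_fst_image_of_isRelPrime (h : IsRelPrime F G) :
    (Prod.fst '' {p : k × k | F.evalEval p.1 p.2 = 0 ∧ G.evalEval p.1 p.2 = 0}).Finite := by
  classical
  obtain ⟨d, hd, a, b, hab⟩ := exists_mul_add_mul_eq_C_of_isRelPrime h
  refine (finite_setOfPred_isRoot hd).subset ?_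
  rintro _ ⟨⟨x, y⟩, ⟨hF, hG⟩, rfl⟩
  simpa [hF, hG, evalEval_C] using (congrArg (evalEval x y) hab).symm

theorem finite_snd_image_of_isRelPrime (h : IsRelPrime F G) :
    (Prod.snd '' {p : k × k | F.evalEval p.1 p.2 = 0 ∧ G.evalEval p.1 p.2 = 0}).Finite := by
  have h' : IsRelPrime (swap F) (swap G) :=
    IsRelPrime.of_map swap (by simpa only [swap_swap_apply] using h)
  refine (finite_fst_image_of_isRelPrime h').subset ?_
  rintro _ ⟨⟨x, y⟩, hFG, rfl⟩
  exact ⟨(y, x), by simpa only [Set.mem_ofPred_eq, evalEval_swap] using hFG, rfl⟩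

theorem finite_setOf_evalEval_eq_zero_of_isRelPrime (h : IsRelPrime F G) :
    {p : k × k | F.evalEval p.1 p.2 = 0 ∧ G.evalEval p.1 p.2 = 0}.Finite :=
  ((finite_fst_image_of_isRelPrime h).prod (finite_snd_image_of_isRelPrime h)).subset
    Set.subset_fst_image_prod_snd_image

end Bivariate

end Polynomial

theorem coprime_plane_curves_finite_intersection_general
    (f g : MvPolynomial (Fin 2) ℂ)
    (hcop : ∀ h : MvPolynomial (Fin 2) ℂ, h ∣ f → h ∣ g → IsUnit h) :
    {p : ℂ × ℂ | MvPolynomial.eval ![p.1, p.2] f = 0 ∧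
      MvPolynomial.eval ![p.1, p.2] g = 0}.Finite := by
  let e := equivMvPolynomial ℂ
  have hfg : IsRelPrime f g := fun h => hcop h
  have hrel : IsRelPrime (e.symm f) (e.symm g) :=
    IsRelPrime.of_map e (by simpa only [AlgEquiv.apply_symm_apply] using hfg)
  have heval (w : MvPolynomial (Fin 2) ℂ) (p : ℂ × ℂ) :
      MvPolynomial.eval ![p.1, p.2] w = (e.symm w).evalEval p.1 p.2 := by
    rw [← eval_equivMvPolynomial, AlgEquiv.apply_symm_apply]
  simpa only [heval] using finite_setOf_evalEval_eq_zero_of_isRelPrime hrel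

/-- Two nonzero polynomials in two variables over `ℂ` with no common
nonconstant factor (every common divisor is a unit) have a finite set of common zeros. -/
theorem coprime_plane_curves_finite_intersection
    (f g : MvPolynomial (Fin 2) ℂ) (hf : f ≠ 0) (hg : g ≠ 0)
    (hcop : ∀ h : MvPolynomial (Fin 2) ℂ, h ∣ f → h ∣ g → IsUnit h) :
    {p : ℂ × ℂ | MvPolynomial.eval ![p.1, p.2] f = 0 ∧
      MvPolynomial.eval ![p.1, p.2] g = 0}.Finite :=
  coprime_plane_curves_finite_intersection_general f g hcop
end
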